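/- arXiv:2010.09200 — 10 statements merged into one kernel-verified Lean document; each statement's English description precedes it below -/
import Mathlib

section
/- Let b, c, r, s, t be positive integers with 1 < b < c, b−1 = r², c−1 = s², and bc−1 = t². Then t > rs, and setting f = t−rs (so f is a positive integer) one has the master equation r² + s² = 2frs + f². -/
/-- The master equation: if b−1 = r², c−1 = s², bc−1 = t² with 1 < b < c,
then t > rs, f = t − rs is positive, and r² + s² = 2frs + f². -/
theorem master_equation (b c r s t : ℤ)
    (hb : 1 < b) (hbc : b < c)
    (hr : 0 < r) (hs : 0 < s) (ht : 0 < t)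
    (hbr : b - 1 = r ^ 2) (hcs : c - 1 = s ^ 2) (hbct : b * c - 1 = t ^ 2) :
    t > r * s ∧ 0 < t - r * s ∧
      r ^ 2 + s ^ 2 = 2 * (t - r * s) * (r * s) + (t - r * s) ^ 2 := by
  have ht2 : t ^ 2 = r ^ 2 * s ^ 2 + r ^ 2 + s ^ 2 := by
    have : b = r ^ 2 + 1 := by linarith
    have hc : c = s ^ 2 + 1 := by linarith
    subst this hc
    ring_nf
    ring_nf at hbct
    linarith
  have hgt : t > r * s := by
    nlinarith [mul_pos hr hs, sq_nonneg (t - r * s), sq_nonneg (t + r * s)]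
  exact ⟨hgt, by linarith, by linear_combination -ht2⟩
end

section
/- Let f ≥ 2 be an integer, let γ = f + √(f²−1), and let (r_k) be the integer sequence with r_0 = 0, r_1 = f and r_{k+1} = 2f·r_k − r_{k−1}. For an integer k ≥ 1 put b = r_k² + 1 and c = r_{k+1}² + 1. Then c < b·γ²; moreover, if k ≥ 2 then γ² − 1/2 < c/b. -/
set_option maxHeartbeats 1600000 in
lemma stmt3_aux (f : ℤ) (hf : 2 ≤ f) (G : ℝ) (hG2 : G ^ 2 = (f : ℝ) ^ 2 - 1)
    (hGpos : 0 < G)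
    (r : ℕ → ℤ) (hr0 : r 0 = 0) (hr1 : r 1 = f)
    (hrec : ∀ k, r (k + 2) = 2 * f * r (k + 1) - r k)
    (k : ℕ) (hk : 1 ≤ k) :
    ((r (k+1) : ℝ) ^ 2 + 1 < ((r k : ℝ) ^ 2 + 1) * ((f : ℝ) + G) ^ 2) ∧
      (2 ≤ k → ((f : ℝ) + G) ^ 2 - 1/2 <
        ((r (k+1) : ℝ) ^ 2 + 1) / ((r k : ℝ) ^ 2 + 1)) := by
  have hF2 : (2 : ℝ) ≤ (f : ℝ) := by exact_mod_cast hf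
  have hGltF : G < (f : ℝ) := by nlinarith
  have hBpos : 0 < (f : ℝ) - G := by linarith
  have hB2 : ((f : ℝ) - G) ^ 2 = 2 * (f : ℝ) * ((f : ℝ) - G) - 1 := by
    linear_combination hG2
  -- integer monotonicity
  have hmono : ∀ n, 0 ≤ r n ∧ r n ≤ r (n + 1) := by
    intro n
    induction n with
    | zero => exact ⟨le_of_eq hr0.symm, by rw [hr0, hr1]; linarith⟩
    | succ n ih =>
      obtain ⟨h0, h1⟩ := ih
      refine ⟨le_trans h0 h1, ?_⟩
      have h := hrec n
      nlinarith
  have hMon : Monotone r := monotone_nat_of_le_succ (fun n => (hmono n).2)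
  have hr2 : r 2 = 2 * f ^ 2 := by
    have h := hrec 0
    rw [hr0, hr1] at h
    linarith [h, sq_nonneg f]
  -- key real identities
  have HL1 : ∀ n, ((f:ℝ) - G) * (r (n+1) : ℝ) = (r n : ℝ) + (f:ℝ) * ((f:ℝ) - G) ^ (n+1) := by
    intro n
    induction n with
    | zero => rw [hr1, hr0]; push_cast; ring
    | succ n ih =>
      have hcast : ((r (n+2) : ℤ) : ℝ) = 2 * (f:ℝ) * (r (n+1) : ℝ) - (r n : ℝ) := by
        rw [hrec n]; push_cast; ring
      rw [hcast]
      linear_combination ((f:ℝ) - G) * ih - ((r (n+1) : ℤ) : ℝ) * hB2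
  have HL2 : ∀ n, 2 * G * (r n : ℝ) * ((f:ℝ) - G) ^ n
      = (f:ℝ) * (1 - ((f:ℝ) - G) ^ (2*n)) := by
    intro n
    induction n with
    | zero => rw [hr0]; push_cast; ring
    | succ n ih =>
      have h1 := HL1 n
      linear_combination (2 * G * ((f:ℝ) - G) ^ n) * h1 + ih
        - (f:ℝ) * ((f:ℝ) - G) ^ (2*n) * hG2
  obtain ⟨m, rfl⟩ : ∃ m, k = m + 1 := ⟨k - 1, (Nat.succ_pred_eq_of_pos hk).symm⟩
  set X : ℝ := (r (m+1) : ℝ) with hX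
  set Y : ℝ := (r (m+2) : ℝ) with hY
  set p : ℝ := ((f:ℝ) - G) ^ (m+1) with hp
  have hppos : 0 < p := pow_pos hBpos _
  have hXnn : (0 : ℝ) ≤ X := by
    have := (hmono (m+1)).1
    rw [hX]; exact_mod_cast this
  have e1 : ((f:ℝ) - G) * Y = X + (f:ℝ) * ((f:ℝ) - G) * p := by
    have := HL1 (m+1)
    rw [hY, hX, hp]
    linear_combination this
  have e2 : 2 * G * X * p = (f:ℝ) * (1 - p ^ 2) := by
    have := HL2 (m+1)
    rw [hX, hp]
    have hpow : (((f:ℝ) - G) ^ (m+1)) ^ 2 = ((f:ℝ) - G) ^ (2*(m+1)) := by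
      rw [← pow_mul, Nat.mul_comm]
    linear_combination this + (f:ℝ) * hpow
  -- key inequality:  B²Y² + B² < X² + 1
  have hsub : ((f:ℝ)-G)^2*Y^2 + ((f:ℝ)-G)^2 - X^2 - 1
      = 2*(f:ℝ)*X*((f:ℝ)-G)*p + (f:ℝ)^2*((f:ℝ)-G)^2*p^2 + ((f:ℝ)-G)^2 - 1 := by
    have h : (((f:ℝ)-G)*Y)^2 = (X + (f:ℝ)*((f:ℝ)-G)*p)^2 := by rw [e1]
    linear_combination h
  have hmul : 2*G*(2*(f:ℝ)*X*((f:ℝ)-G)*p + (f:ℝ)^2*((f:ℝ)-G)^2*p^2 + ((f:ℝ)-G)^2 - 1)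
      = 2*((f:ℝ)-G)*(2 - (f:ℝ)^2 - (f:ℝ)^3*((f:ℝ)-G)*p^2) := by
    linear_combination (2*(f:ℝ)*((f:ℝ)-G)) * e2
      + (-2*(f:ℝ)^2*((f:ℝ)-G)*p^2 + 2*G - 4*(f:ℝ)) * hG2
  have hneg : 2*((f:ℝ)-G)*(2 - (f:ℝ)^2 - (f:ℝ)^3*((f:ℝ)-G)*p^2) < 0 := by
    have h1 : (0:ℝ) < (f:ℝ)^3*((f:ℝ)-G)*p^2 := by positivity
    nlinarith
  have hkey : ((f:ℝ)-G)^2*Y^2 + ((f:ℝ)-G)^2 < X^2 + 1 := by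
    nlinarith [hsub, hmul, hneg, hGpos]
  have hγB : ((f:ℝ)+G)*((f:ℝ)-G) = 1 := by linear_combination -hG2
  have main1 : Y^2 + 1 < (X^2 + 1) * ((f:ℝ)+G)^2 := by
    have hγpos : (0:ℝ) < ((f:ℝ)+G)^2 := by positivity
    have h := mul_lt_mul_of_pos_left hkey hγpos
    have hside : ((f:ℝ)+G)^2 * (((f:ℝ)-G)^2*Y^2 + ((f:ℝ)-G)^2) = Y^2 + 1 := by
      linear_combination (-((f:ℝ)^2 - G^2 + 1)*(Y^2+1)) * hG2
    nlinarith [h, hside]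
  refine ⟨main1, ?_⟩
  intro hk2
  have hbpos : (0:ℝ) < X^2 + 1 := by positivity
  rw [lt_div_iff₀ hbpos]
  have hX2 : 2*(f:ℝ)^2 ≤ X := by
    have h := hMon hk2
    rw [hr2] at h
    rw [hX]; exact_mod_cast h
  have hYeq : Y = ((f:ℝ)+G)*X + ((f:ℝ)+G)*(f:ℝ)*((f:ℝ)-G)*p := by
    linear_combination ((f:ℝ)+G)*e1 + Y*hG2
  have hY2 : (((f:ℝ)+G)*X)^2 ≤ Y^2 := by
    have h1 : (0:ℝ) < ((f:ℝ)+G)*(f:ℝ)*((f:ℝ)-G)*p := by positivity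
    have hge : ((f:ℝ)+G)*X ≤ Y := by linarith [hYeq, h1]
    have hnn2 : (0:ℝ) ≤ ((f:ℝ)+G)*X := mul_nonneg (by positivity) hXnn
    exact pow_le_pow_left₀ hnn2 hge 2
  have hγlt : ((f:ℝ)+G)^2 < 4*(f:ℝ)^2 := by nlinarith
  have h5 : ((f:ℝ)+G)^2 < (X^2+3)/2 := by
    nlinarith [hγlt, hX2, hF2, mul_le_mul hX2 hX2 (by positivity) hXnn]
  nlinarith [hY2, h5]

/-- For f ≥ 2, γ = f + √(f²−1), r_0 = 0, r_1 = f, r_{k+1} = 2f·r_k − r_{k−1},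
b = r_k² + 1, c = r_{k+1}² + 1 (k ≥ 1): one has c < b·γ², and for k ≥ 2
moreover γ² − 1/2 < c/b. -/
theorem stmt3 (f : ℤ) (hf : 2 ≤ f) (r : ℕ → ℤ)
    (hr0 : r 0 = 0) (hr1 : r 1 = f)
    (hrec : ∀ k, r (k + 2) = 2 * f * r (k + 1) - r k)
    (k : ℕ) (hk : 1 ≤ k) (b c : ℤ)
    (hb : b = (r k) ^ 2 + 1) (hc : c = (r (k + 1)) ^ 2 + 1) :
    (c : ℝ) < (b : ℝ) * ((f : ℝ) + Real.sqrt ((f : ℝ) ^ 2 - 1)) ^ 2 ∧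
      (2 ≤ k →
        ((f : ℝ) + Real.sqrt ((f : ℝ) ^ 2 - 1)) ^ 2 - 1 / 2 < (c : ℝ) / (b : ℝ)) := by
  have hF2 : (2 : ℝ) ≤ (f : ℝ) := by exact_mod_cast hf
  have hnn : (0:ℝ) ≤ (f : ℝ) ^ 2 - 1 := by nlinarith
  have hG2 : Real.sqrt ((f : ℝ) ^ 2 - 1) ^ 2 = (f : ℝ) ^ 2 - 1 := Real.sq_sqrt hnn
  have hGpos : 0 < Real.sqrt ((f : ℝ) ^ 2 - 1) := Real.sqrt_pos.mpr (by nlinarith)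
  obtain ⟨h1, h2⟩ := stmt3_aux f hf _ hG2 hGpos r hr0 hr1 hrec k hk
  constructor
  · rw [hb, hc]; push_cast; exact h1
  · intro hk2
    have := h2 hk2
    rw [hb, hc]; push_cast; exact this
end

section
/- If (1,b,c,d) is a Diophantine D(−1)-quadruple with 10^13 < b < c < d such that b = r_k² + 1 and c = r_{k+1}² + 1 for some integer f ≥ 2 and some integer k ≥ 1, then γ^{2k−1} < b, where γ = f + √(f²−1). -/
/-!
By Binet's formula, `2 √(f² - 1) r_k = f (γ^k - γ^{-k})`, hence
`b - 1 = r_k² = f² (γ^{2k} - 2 + γ^{-2k}) / (4 (f² - 1))`. For `f ≥ 2` one has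
`4 (f² - 1) ≤ f² γ`, so the leading term already bounds `γ^{2k-1}`, and the remaining terms
`1 - f² (2 - γ^{-2k}) / (4 (f² - 1))` are positive because `2 f² < 4 (f² - 1)`.
-/

theorem binet_formula {R : Type*} [CommRing R] {γ δ : R} {u : ℕ → R} (h0 : u 0 = 0)
    (hrec : ∀ j, u (j + 2) = (γ + δ) * u (j + 1) - γ * δ * u j) (j : ℕ) :
    u j * (γ - δ) = u 1 * (γ ^ j - δ ^ j) := by
  induction j using Nat.twoStepInduction with
  | zero => simp [h0]
  | one => ring
  | more j ih₀ ih₁ => rw [hrec]; linear_combination (γ + δ) * ih₁ - γ * δ * ih₀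

section

variable {f : ℝ}

theorem four_mul_sq_sub_one_le (hf : 2 ≤ f) :
    4 * (f ^ 2 - 1) ≤ f ^ 2 * (f + √(f ^ 2 - 1)) := by
  have hs : f - 1 ≤ √(f ^ 2 - 1) := Real.le_sqrt_of_sq_le (by nlinarith)
  nlinarith [mul_le_mul_of_nonneg_left hs (sq_nonneg f),
    mul_nonneg (sub_nonneg.2 hf) (by nlinarith : (0 : ℝ) ≤ 2 * f ^ 2 - f - 2)]

theorem pow_two_mul_sub_one_lt_sq_add_one (hf : 2 ≤ f) {k : ℕ} (hk : 1 ≤ k) {x : ℝ}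
    (hx : x * (2 * √(f ^ 2 - 1)) = f * ((f + √(f ^ 2 - 1)) ^ k - (f - √(f ^ 2 - 1)) ^ k)) :
    (f + √(f ^ 2 - 1)) ^ (2 * k - 1) < x ^ 2 + 1 := by
  have hA := four_mul_sq_sub_one_le hf
  set s := √(f ^ 2 - 1)
  set γ := f + s
  have hs2 : s ^ 2 = f ^ 2 - 1 := Real.sq_sqrt (by nlinarith)
  have hs : 0 < s := Real.sqrt_pos.2 (by nlinarith)
  have hγ : 0 < γ := by positivity
  have hpow : γ ^ (2 * k - 1) * γ = (γ ^ k) ^ 2 := by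
    rw [← pow_succ, ← pow_mul]; congr 1; omega
  have hXY : γ ^ k * (f - s) ^ k = 1 := by
    rw [← mul_pow, show γ * (f - s) = 1 by linear_combination -hs2, one_pow]
  have hrest : 0 < f ^ 2 * ((f - s) ^ k) ^ 2 + 2 * f ^ 2 - 4 := by
    nlinarith [sq_nonneg (f * (f - s) ^ k)]
  rw [← mul_lt_mul_iff_of_pos_right (by positivity : 0 < γ * (4 * s ^ 2))]
  calc γ ^ (2 * k - 1) * (γ * (4 * s ^ 2)) = (γ ^ k) ^ 2 * (4 * s ^ 2) := by
        rw [← mul_assoc, hpow]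
    _ ≤ (γ ^ k) ^ 2 * (f ^ 2 * γ) := by rw [hs2]; gcongr
    _ < (γ ^ k) ^ 2 * (f ^ 2 * γ) + γ * (f ^ 2 * ((f - s) ^ k) ^ 2 + 2 * f ^ 2 - 4) :=
        lt_add_of_pos_right _ (mul_pos hγ hrest)
    _ = (x ^ 2 + 1) * (γ * (4 * s ^ 2)) := by
        linear_combination -γ * (x * (2 * s) + f * (γ ^ k - (f - s) ^ k)) * hx
          + 2 * f ^ 2 * γ * hXY - 4 * γ * hs2

end

theorem stmt4_general (b : ℤ)
    (f : ℤ) (hf : 2 ≤ f) (r : ℕ → ℤ)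
    (hr0 : r 0 = 0) (hr1 : r 1 = f)
    (hrec : ∀ j, r (j + 2) = 2 * f * r (j + 1) - r j)
    (k : ℕ) (hk : 1 ≤ k)
    (hbk : b = (r k) ^ 2 + 1) :
    ((f : ℝ) + Real.sqrt ((f : ℝ) ^ 2 - 1)) ^ (2 * k - 1) < (b : ℝ) := by
  have hfR : (2 : ℝ) ≤ f := by exact_mod_cast hf
  set s := √((f : ℝ) ^ 2 - 1)
  have hconj : ((f : ℝ) + s) * (f - s) = 1 := by
    linear_combination -Real.sq_sqrt (by nlinarith : (0 : ℝ) ≤ (f : ℝ) ^ 2 - 1)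
  have hbinet := binet_formula (γ := f + s) (δ := f - s) (u := fun j => (r j : ℝ))
    (by simp [hr0]) (fun j => by rw [hconj, hrec j]; push_cast; ring) k
  rw [hbk]
  push_cast
  exact pow_two_mul_sub_one_lt_sq_add_one hfR hk (by rw [hr1] at hbinet; linear_combination hbinet)

/-- If (1,b,c,d) is a D(−1)-quadruple with 10^13 < b < c < d and b = r_k² + 1,
c = r_{k+1}² + 1 for some f ≥ 2 and k ≥ 1, then γ^{2k−1} < b, where
γ = f + √(f²−1). -/
theorem stmt4 (b c d : ℤ)
    (hb : 10 ^ 13 < b) (hbc : b < c) (hcd : c < d)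
    (h1 : IsSquare (b - 1)) (h2 : IsSquare (c - 1)) (h3 : IsSquare (d - 1))
    (h4 : IsSquare (b * c - 1)) (h5 : IsSquare (b * d - 1)) (h6 : IsSquare (c * d - 1))
    (f : ℤ) (hf : 2 ≤ f) (r : ℕ → ℤ)
    (hr0 : r 0 = 0) (hr1 : r 1 = f)
    (hrec : ∀ j, r (j + 2) = 2 * f * r (j + 1) - r j)
    (k : ℕ) (hk : 1 ≤ k)
    (hbk : b = (r k) ^ 2 + 1) (hck : c = (r (k + 1)) ^ 2 + 1) :
    ((f : ℝ) + Real.sqrt ((f : ℝ) ^ 2 - 1)) ^ (2 * k - 1) < (b : ℝ) :=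
  stmt4_general b f hf r hr0 hr1 hrec k hk hbk
end

section
/- If (1,b,c,d) is a Diophantine D(−1)-quadruple with 10^13 < b < c < d such that b = r_k² + 1 and c = r_{k+1}² + 1 for some integer f ≥ 2 and some integer k ≥ 1, then c < b³. -/
/-- If (1,b,c,d) is a D(−1)-quadruple with 10^13 < b < c < d and b = r_k² + 1,
c = r_{k+1}² + 1 for some f ≥ 2 and k ≥ 1, then c < b³. -/
theorem stmt5 (b c d : ℤ)
    (hb : 10 ^ 13 < b) (hbc : b < c) (hcd : c < d)
    (h1 : IsSquare (b - 1)) (h2 : IsSquare (c - 1)) (h3 : IsSquare (d - 1))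
    (h4 : IsSquare (b * c - 1)) (h5 : IsSquare (b * d - 1)) (h6 : IsSquare (c * d - 1))
    (f : ℤ) (hf : 2 ≤ f) (r : ℕ → ℤ)
    (hr0 : r 0 = 0) (hr1 : r 1 = f)
    (hrec : ∀ j, r (j + 2) = 2 * f * r (j + 1) - r j)
    (k : ℕ) (hk : 1 ≤ k)
    (hbk : b = (r k) ^ 2 + 1) (hck : c = (r (k + 1)) ^ 2 + 1) :
    c < b ^ 3 := by
  have key : ∀ j, 0 ≤ r j ∧ r j ≤ r (j + 1) := by
    intro j
    induction j with
    | zero =>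
      rw [hr0, hr1]
      exact ⟨le_refl 0, by linarith⟩
    | succ n ih =>
      obtain ⟨h0, hle⟩ := ih
      have h1' : 0 ≤ r (n + 1) := le_trans h0 hle
      refine ⟨h1', ?_⟩
      rw [hrec]
      nlinarith
  have hfk : ∀ j, f ≤ r (j + 1) := by
    intro j
    induction j with
    | zero => rw [hr1]
    | succ n ih => exact le_trans ih (key (n + 1)).2
  obtain ⟨m, rfl⟩ : ∃ m, k = m + 1 := ⟨k - 1, (Nat.succ_pred_eq_of_pos hk).symm⟩
  have hfle : f ≤ r (m + 1) := hfk m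
  have hm0 : 0 ≤ r m := (key m).1
  have hrk1 : r (m + 1 + 1) = 2 * f * r (m + 1) - r m := hrec m
  set x := r (m + 1) with hx
  have hx2 : 10 ^ 13 - 1 < x ^ 2 := by nlinarith
  have hxpos : 0 < x := by linarith
  have hx3 : 3 ≤ x := by nlinarith
  have hy : r (m + 1 + 1) ≤ 2 * x ^ 2 := by
    rw [hrk1]; nlinarith
  have hy0 : 0 ≤ r (m + 1 + 1) := (key (m + 1 + 1)).1
  have hyy : r (m + 1 + 1) ^ 2 ≤ 4 * x ^ 4 := by nlinarith
  rw [hbk, hck]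
  nlinarith [hyy, hx3, sq_nonneg x]
end

section
/- For all real numbers b and c with 1 < b < c one has log(√(c−1) + √c) / log(√(b−1) + √b) < log c / log b; equivalently, the function x ↦ log(√x + √(x−1)) / log x is strictly decreasing for x > 1. -/
/-!
With `u = arcosh √x = log (√x + √(x - 1))` we have `cosh u = √x`, so `log x = 2 log (cosh u)` and
the claim says that `u ↦ log (cosh u) / u` is strictly increasing on `u > 0`. For `0 < u < v` and
`λ = u / v` this is `cosh (λ v) < (cosh v) ^ λ`, i.e. the average of `(e^v) ^ λ` and `(e^{-v}) ^ λ`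
is less than the `λ`-th power of the average of `e^v` and `e^{-v}`: strict concavity of `t ↦ t ^ λ`.
-/

open Real Set

namespace Real

theorem cosh_mul_lt_cosh_rpow {l v : ℝ} (hl0 : 0 < l) (hl1 : l < 1) (hv : v ≠ 0) :
    cosh (l * v) < cosh v ^ l := by
  have hne : exp v ≠ exp (-v) := by
    rw [Ne, exp_eq_exp]
    intro h
    exact hv (by linarith)
  have h := (strictConcaveOn_rpow hl0 hl1).2 (mem_Ici.2 (exp_pos v).le)
    (mem_Ici.2 (exp_pos (-v)).le) hne one_half_pos one_half_pos (add_halves 1)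
  simp only [smul_eq_mul, ← exp_mul] at h
  calc cosh (l * v) = 1 / 2 * exp (v * l) + 1 / 2 * exp (-v * l) := by
        rw [cosh_eq, mul_comm l v, neg_mul]; ring
    _ < (1 / 2 * exp v + 1 / 2 * exp (-v)) ^ l := h
    _ = cosh v ^ l := by rw [cosh_eq]; congr 1; ring

theorem strictMonoOn_log_cosh_div : StrictMonoOn (fun u => log (cosh u) / u) (Ioi 0) := by
  intro u (hu : 0 < u) v (hv : 0 < v) huv
  have hlt : cosh u < cosh v ^ (u / v) := by
    simpa [div_mul_cancel₀ u hv.ne'] using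
      cosh_mul_lt_cosh_rpow (div_pos hu hv) ((div_lt_one hv).2 huv) hv.ne'
  have hlog : log (cosh u) < u / v * log (cosh v) := by
    simpa [log_rpow (cosh_pos v)] using log_lt_log (cosh_pos u) hlt
  rw [div_lt_div_iff₀ hu hv]
  calc log (cosh u) * v < u / v * log (cosh v) * v := by gcongr
    _ = log (cosh v) * u := by field_simp

theorem arcosh_sqrt {x : ℝ} (hx : 1 ≤ x) : arcosh √x = log (√x + √(x - 1)) := by
  rw [arcosh, sq_sqrt (by linarith)]

theorem strictAntiOn_arcosh_sqrt_div_log :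
    StrictAntiOn (fun x => arcosh √x / log x) (Ioi 1) := by
  intro b (hb : 1 < b) c (hc : 1 < c) hbc
  have hsb : 1 < √b := lt_sqrt_of_sq_lt (by simpa using hb)
  have hsc : 1 < √c := lt_sqrt_of_sq_lt (by simpa using hc)
  have hu : 0 < arcosh √b := arcosh_pos hsb
  have huv : arcosh √b < arcosh √c :=
    (arcosh_lt_arcosh (by positivity) (by positivity)).2 (sqrt_lt_sqrt (by linarith) hbc)
  have key := strictMonoOn_log_cosh_div hu (hu.trans huv) huv
  simp only [cosh_arcosh hsb.le, cosh_arcosh hsc.le] at key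
  have hlb : 0 < log √b := log_pos hsb
  have hlc : 0 < log √c := log_pos hsc
  have hLb : log b = 2 * log √b := by rw [log_sqrt (by linarith)]; ring
  have hLc : log c = 2 * log √c := by rw [log_sqrt (by linarith)]; ring
  simp only [hLb, hLc]
  rw [div_lt_div_iff₀ (by positivity) (by positivity)]
  linarith [(div_lt_div_iff₀ hu (hu.trans huv)).1 key]

end Real

/-- For 1 < b < c, log(√(c−1)+√c)/log(√(b−1)+√b) < log c / log b; equivalently the
function x ↦ log(√x+√(x−1))/log x is strictly decreasing for x > 1. -/
theorem stmt7 :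
    (∀ b c : ℝ, 1 < b → b < c →
      Real.log (Real.sqrt (c - 1) + Real.sqrt c) /
          Real.log (Real.sqrt (b - 1) + Real.sqrt b) <
        Real.log c / Real.log b) ∧
    StrictAntiOn
      (fun x : ℝ => Real.log (Real.sqrt x + Real.sqrt (x - 1)) / Real.log x)
      (Set.Ioi (1 : ℝ)) := by
  have hanti := strictAntiOn_arcosh_sqrt_div_log
  refine ⟨fun b c hb hbc => ?_, hanti.congr fun x hx => by simp only [arcosh_sqrt (le_of_lt hx)]⟩
  have hc : 1 < c := hb.trans hbc
  have hu : 0 < arcosh √b := arcosh_pos (lt_sqrt_of_sq_lt (by simpa using hb))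
  have h := (div_lt_div_iff₀ (log_pos hc) (log_pos hb)).1 (hanti hb hc hbc)
  simp only [arcosh_sqrt hb.le, arcosh_sqrt hc.le, add_comm √b, add_comm √c] at h hu
  rw [div_lt_div_iff₀ hu (log_pos hb)]
  linarith
end

section
/- Let (1,b,c,d) with 1 < b < c < d be a Diophantine D(−1)-quadruple with c > b³. Then n > min{b, 0.125·√(c/b)}, where n is the index of the solution in the second recurrent sequence, i.e. z = v_m = w_n. -/
private lemma intle_of_sq_le {x y : ℤ} (hy : 0 ≤ y) (h : x^2 ≤ y^2) : x ≤ y := by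
  nlinarith only [hy, h, sq_nonneg (x - y), sq_nonneg (x + y)]

private lemma intlt_of_sq_lt {x y : ℤ} (hy : 0 ≤ y) (h : x^2 < y^2) : x < y := by
  nlinarith only [hy, h, sq_nonneg (x - y), sq_nonneg (x + y)]

set_option maxHeartbeats 2000000 in
/-- If c > b³ then n > min{b, 0.125·√(c/b)}. -/
theorem stmt9 (b c d r s t z ρ : ℤ)
    (hb : 1 < b) (hbc : b < c) (hcd : c < d)
    (hsq3 : IsSquare (d - 1)) (hsq5 : IsSquare (b * d - 1))
    (hr : 0 < r) (hs : 0 < s) (ht : 0 < t) (hz : 0 < z)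
    (hbr : b - 1 = r ^ 2) (hcs : c - 1 = s ^ 2) (hbct : b * c - 1 = t ^ 2)
    (hcdz : c * d - 1 = z ^ 2)
    (hrho : ρ = 1 ∨ ρ = -1)
    (v w : ℕ → ℤ)
    (hv0 : v 0 = s) (hv1 : v 1 = (2 * c - 1) * s)
    (hv : ∀ i, v (i + 2) = (4 * c - 2) * v (i + 1) - v i)
    (hw0 : w 0 = s) (hw1 : w 1 = (2 * b * c - 1) * s + 2 * ρ * r * t * c)
    (hw : ∀ i, w (i + 2) = (4 * b * c - 2) * w (i + 1) - w i)
    (m n : ℕ) (hm : 0 < m) (hn : 0 < n)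
    (hzv : z = v m) (hzw : z = w n)
    (hcb : b ^ 3 < c) :
    (n : ℝ) > min (b : ℝ) (0.125 * Real.sqrt ((c : ℝ) / (b : ℝ))) := by
  have hb2 : (2:ℤ) ≤ b := hb
  have hbpos : (0:ℤ) < b := by linarith only [hb2]
  have hbb : 2*b ≤ b*b := by nlinarith only [hb2]
  have hbbb : 2*(b*b) ≤ b*(b*b) := by
    have h1 : (0:ℤ) ≤ (b-2)*(b*b) :=
      mul_nonneg (by linarith only [hb2]) (mul_nonneg hbpos.le hbpos.le)
    linarith only [h1]
  have hb3 : b^3 = b*(b*b) := by ring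
  have hc9 : (9:ℤ) ≤ c := by linarith only [hbb, hbbb, hcb, hb3, hb2]
  have hc4b : 4*b < c := by linarith only [hbb, hbbb, hcb, hb3, hb2]
  have hcb1 : b + 1 ≤ c := by linarith only [hbb, hbbb, hcb, hb3, hb2]
  have hcpos : (0:ℤ) < c := by linarith only [hc9]
  have hbc18' : (18:ℤ) ≤ b*c := by
    calc (18:ℤ) = 2*9 := by norm_num
      _ ≤ b*c := mul_le_mul hb2 hc9 (by norm_num) (by linarith only [hb2])
  have hs2 : s^2 = c - 1 := hcs.symm
  have ht2 : t^2 = b*c - 1 := hbct.symm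
  have hr2 : r^2 = b - 1 := hbr.symm
  have hrs2 : r^2*s^2 = (b-1)*(c-1) := by rw [hr2, hs2]
  have hs3 : (3:ℤ) ≤ s := by nlinarith only [hs2, hc9, hs]
  have hrst : r*s < t := by
    refine intlt_of_sq_lt (le_of_lt ht) ?_
    have e : (r*s)^2 = r^2*s^2 := by ring
    rw [e, hrs2]; linarith only [ht2, hb2, hc9]
  -- negation of the goal
  by_contra hcon
  push_neg at hcon
  have hnb : (n:ℤ) ≤ b := by
    have h1 : (n:ℝ) ≤ (b:ℝ) := hcon.trans (min_le_left _ _)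
    exact_mod_cast h1
  have hn64 : 64*b*(n:ℤ)^2 ≤ c := by
    have h2 : (n:ℝ) ≤ 0.125 * Real.sqrt ((c:ℝ)/(b:ℝ)) := hcon.trans (min_le_right _ _)
    have hbpos' : (0:ℝ) < (b:ℝ) := by exact_mod_cast hbpos
    have hcb0 : (0:ℝ) ≤ (c:ℝ)/(b:ℝ) := by positivity
    rw [show (0.125:ℝ) = 1/8 by norm_num] at h2
    have h8 : 8*(n:ℝ) ≤ Real.sqrt ((c:ℝ)/(b:ℝ)) := by linarith only [h2]
    have h0 : (0:ℝ) ≤ 8*(n:ℝ) := by positivity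
    have h64 : (8*(n:ℝ))^2 ≤ (c:ℝ)/(b:ℝ) := by
      nlinarith only [h8, h0, Real.sq_sqrt hcb0, Real.sqrt_nonneg ((c:ℝ)/(b:ℝ))]
    rw [le_div_iff₀ hbpos'] at h64
    have hfin : (64:ℝ)*(b:ℝ)*(n:ℝ)^2 ≤ (c:ℝ) := by linarith only [h64]
    exact_mod_cast hfin
  -- growth: m ≤ 2n
  have hVlow : ∀ i, 0 < v i ∧ (2*c-1) * v i ≤ v (i+1) := by
    intro i; induction i with
    | zero =>
      refine ⟨by rw [hv0]; exact hs, ?_⟩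
      rw [hv0, hv1]
    | succ k ih =>
      obtain ⟨h1, h2⟩ := ih
      have h3 : 0 < v (k+1) := by
        have h4 := mul_pos (show (0:ℤ) < 2*c-1 by linarith only [hc9]) h1
        linarith only [h4, h2]
      refine ⟨h3, ?_⟩
      have hrec : v (k+1+1) = (4*c-2) * v (k+1) - v k := hv k
      rw [hrec]
      have p1 : 0 ≤ (2*c-2) * v k := mul_nonneg (by linarith only [hc9]) h1.le
      have p2 : 0 ≤ (2*c-2) * v (k+1) := mul_nonneg (by linarith only [hc9]) h3.le
      linarith only [p1, p2, h2]
  have hVpow : ∀ i, s * (2*c-1)^i ≤ v i := by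
    intro i; induction i with
    | zero => simp [hv0]
    | succ k ih =>
      have h2 := (hVlow k).2
      calc s * (2*c-1)^(k+1) = (2*c-1) * (s * (2*c-1)^k) := by ring
        _ ≤ (2*c-1) * v k := by
            apply mul_le_mul_of_nonneg_left ih; linarith only [hc9]
        _ ≤ v (k+1) := h2
  have hrtbs : r*t < b*s := by
    refine intlt_of_sq_lt (by positivity) ?_
    have e1 : (r*t)^2 = r^2*t^2 := by ring
    have e2 : (b*s)^2 = b^2*s^2 := by ring
    rw [e1, e2, hr2, ht2, hs2]
    have pp : (0:ℤ) ≤ b*(c-b-1) := mul_nonneg hbpos.le (by linarith only [hcb1])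
    nlinarith only [pp, hb2, hc9]
  have hrtc : (0:ℤ) < r*t*c := mul_pos (mul_pos hr ht) hcpos
  have hw01a : w 0 ≤ w 1 := by
    rcases hrho with h|h <;> rw [hw0, hw1, h]
    · have p1 : 0 ≤ (2*b*c-2)*s := mul_nonneg (by linarith only [hbb, hbc18']) hs.le
      linarith only [hrtc, p1]
    · have key : r*t*c ≤ (b*c-1)*s := by
        refine intle_of_sq_le (mul_nonneg (by linarith only [hbc18']) hs.le) ?_
        have e1 : (r*t*c)^2 = r^2*t^2*c^2 := by ring
        have e2 : ((b*c-1)*s)^2 = (b*c-1)^2*s^2 := by ring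
        rw [e1, e2, hr2, ht2, hs2]
        have h1 : (0:ℤ) ≤ c*(c-b-1)+1 := by
          have := mul_nonneg hcpos.le (show (0:ℤ) ≤ c-b-1 by linarith only [hcb1])
          linarith only [this]
        have h2' : (0:ℤ) ≤ b*c-1 := by linarith only [hbc18']
        have h3 := mul_nonneg h2' h1
        nlinarith only [h3]
      linarith only [key]
  have hw1le : w 1 ≤ (4*b*c) * w 0 := by
    rw [hw0, hw1]
    have p1 : r*t*c < b*s*c := mul_lt_mul_of_pos_right hrtbs hcpos
    have p2 : 0 ≤ b*c*s := mul_nonneg (mul_nonneg hbpos.le hcpos.le) hs.le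
    rcases hrho with h|h <;> rw [h] <;> linarith only [p1, p2, hrtc, hs]
  have hWlow : ∀ i, 0 < w i ∧ w i ≤ w (i+1) ∧ w (i+1) ≤ (4*b*c) * w i := by
    intro i; induction i with
    | zero => exact ⟨by rw [hw0]; exact hs, hw01a, hw1le⟩
    | succ k ih =>
      obtain ⟨h1, h2, h3⟩ := ih
      have h4 : 0 < w (k+1) := lt_of_lt_of_le h1 h2
      have hrec : w (k+1+1) = (4*b*c-2) * w (k+1) - w k := hw k
      have p2 : 0 ≤ (4*b*c-4) * w (k+1) := mul_nonneg (by linarith only [hbc18']) h4.le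
      refine ⟨h4, ?_, ?_⟩ <;> rw [hrec]
      · linarith only [p2, h2]
      · linarith only [h1, h4]
  have hWpow : ∀ i, w i ≤ s * (4*b*c)^i := by
    intro i; induction i with
    | zero => simp [hw0]
    | succ k ih =>
      have h3 := (hWlow k).2.2
      calc w (k+1) ≤ (4*b*c) * w k := h3
        _ ≤ (4*b*c) * (s * (4*b*c)^k) := by
            apply mul_le_mul_of_nonneg_left ih
            positivity
        _ = s * (4*b*c)^(k+1) := by ring
  have hmn : m ≤ 2*n := by
    have h1 : s * (2*c-1)^m ≤ s * (4*b*c)^n := by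
      calc s*(2*c-1)^m ≤ v m := hVpow m
        _ = w n := by rw [← hzv, hzw]
        _ ≤ s * (4*b*c)^n := hWpow n
    have h2 : (2*c-1)^m ≤ (4*b*c)^n := le_of_mul_le_mul_left h1 hs
    have h3 : (4*b*c)^n ≤ ((2*c-1)^2)^n := by
      apply pow_le_pow_left₀ (by positivity)
      have pp : (0:ℤ) ≤ c*(c-b-1) := mul_nonneg hcpos.le (by linarith only [hcb1])
      linarith only [pp]
    rw [← pow_mul] at h3
    exact (pow_le_pow_iff_right₀ (show (1:ℤ) < 2*c-1 by linarith only [hc9])).mp (h2.trans h3)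
  -- congruences mod c²
  have hV2 : ∀ i : ℕ, ((c^2:ℤ) ∣ v i - (-1)^i * (s * (1 - 2*(i:ℤ)^2*c))) ∧
      ((c^2:ℤ) ∣ v (i+1) - (-1)^(i+1) * (s * (1 - 2*((i:ℤ)+1)^2*c))) := by
    intro i; induction i with
    | zero =>
      constructor
      · have e : v 0 - (-1:ℤ)^(0:ℕ) * (s * (1 - 2*((0:ℕ):ℤ)^2*c)) = 0 := by
          rw [hv0]; norm_num
        rw [e]
        exact dvd_zero _
      · have e : v 1 - (-1:ℤ)^(0+1:ℕ) * (s * (1 - 2*(((0:ℕ):ℤ)+1)^2*c)) = 0 := by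
          rw [hv1]; push_cast; ring
        rw [e]
        exact dvd_zero _
    | succ k ih =>
      obtain ⟨ih1, ih2⟩ := ih
      constructor
      · have e : ((k+1:ℕ):ℤ) = (k:ℤ)+1 := by push_cast; ring
        rw [e]; exact ih2
      · obtain ⟨a1, e1⟩ := ih1
        obtain ⟨a2, e2⟩ := ih2
        refine ⟨(4*c-2)*a2 - a1 + (-1)^k * (8*((k:ℤ)+1)^2*s), ?_⟩
        have e1' : v k = c^2*a1 + (-1)^k * (s * (1 - 2*(k:ℤ)^2*c)) := by linarith only [e1]
        have e2' : v (k+1) = c^2*a2 + (-1)^(k+1) * (s * (1 - 2*((k:ℤ)+1)^2*c)) := by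
          linarith only [e2]
        have hrec : v (k+1+1) = (4*c-2) * v (k+1) - v k := hv k
        rw [hrec, e1', e2']
        push_cast
        ring
  have hW2 : ∀ i : ℕ, ((c^2:ℤ) ∣ w i - (-1)^i * (s * (1 - 2*b*(i:ℤ)^2*c) - 2*ρ*r*t*c*(i:ℤ))) ∧
      ((c^2:ℤ) ∣ w (i+1) - (-1)^(i+1) * (s * (1 - 2*b*((i:ℤ)+1)^2*c) - 2*ρ*r*t*c*((i:ℤ)+1))) := by
    intro i; induction i with
    | zero =>
      constructor
      · have e : w 0 - (-1:ℤ)^(0:ℕ) * (s * (1 - 2*b*((0:ℕ):ℤ)^2*c) - 2*ρ*r*t*c*((0:ℕ):ℤ)) = 0 := by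
          rw [hw0]; norm_num
        rw [e]
        exact dvd_zero _
      · have e : w 1 - (-1:ℤ)^(0+1:ℕ) * (s * (1 - 2*b*(((0:ℕ):ℤ)+1)^2*c) - 2*ρ*r*t*c*(((0:ℕ):ℤ)+1)) = 0 := by
          rw [hw1]; push_cast; ring
        rw [e]
        exact dvd_zero _
    | succ k ih =>
      obtain ⟨ih1, ih2⟩ := ih
      constructor
      · have e : ((k+1:ℕ):ℤ) = (k:ℤ)+1 := by push_cast; ring
        rw [e]; exact ih2
      · obtain ⟨a1, e1⟩ := ih1
        obtain ⟨a2, e2⟩ := ih2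
        refine ⟨(4*b*c-2)*a2 - a1 + (-1)^k * (8*b*((k:ℤ)+1) * (b*((k:ℤ)+1)*s + ρ*r*t)), ?_⟩
        have e1' : w k = c^2*a1 + (-1)^k * (s * (1 - 2*b*(k:ℤ)^2*c) - 2*ρ*r*t*c*(k:ℤ)) := by
          linarith only [e1]
        have e2' : w (k+1) = c^2*a2 + (-1)^(k+1) * (s * (1 - 2*b*((k:ℤ)+1)^2*c) - 2*ρ*r*t*c*((k:ℤ)+1)) := by
          linarith only [e2]
        have hrec : w (k+1+1) = (4*b*c-2) * w (k+1) - w k := hw k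
        rw [hrec, e1', e2']
        push_cast
        ring
  -- combine
  have hvw : v m = w n := by rw [← hzv, hzw]
  have hdvd1 : (c^2:ℤ) ∣ ((-1)^n * (s * (1 - 2*b*(n:ℤ)^2*c) - 2*ρ*r*t*c*(n:ℤ))
      - (-1)^m * (s * (1 - 2*(m:ℤ)^2*c))) := by
    have h := dvd_sub (hV2 m).1 (hW2 n).1
    have e : (v m - (-1)^m * (s * (1 - 2*(m:ℤ)^2*c)))
        - (w n - (-1)^n * (s * (1 - 2*b*(n:ℤ)^2*c) - 2*ρ*r*t*c*(n:ℤ)))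
        = (-1)^n * (s * (1 - 2*b*(n:ℤ)^2*c) - 2*ρ*r*t*c*(n:ℤ))
          - (-1)^m * (s * (1 - 2*(m:ℤ)^2*c)) := by
      rw [hvw]; ring
    rwa [e] at h
  have hcc : (c:ℤ) ∣ c^2 := dvd_pow_self c two_ne_zero
  have h2s : 2*s < c := by nlinarith only [hs2, hs3, hs]
  have hcne : (c:ℤ) ≠ 0 := by linarith only [hc9]
  -- parity and divisibility c ∣ 2X
  have hX : (c:ℤ) ∣ 2*(s*b*(n:ℤ)^2 + ρ*r*t*(n:ℤ) - s*(m:ℤ)^2) := by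
    have hdc : (c:ℤ) ∣ ((-1)^n * (s * (1 - 2*b*(n:ℤ)^2*c) - 2*ρ*r*t*c*(n:ℤ))
        - (-1)^m * (s * (1 - 2*(m:ℤ)^2*c))) := hcc.trans hdvd1
    rcases Nat.even_or_odd m with hme|hmo <;> rcases Nat.even_or_odd n with hne|hno
    · rw [hme.neg_one_pow, hne.neg_one_pow] at hdvd1
      obtain ⟨k, hk⟩ := hdvd1
      refine ⟨-k, mul_left_cancel₀ hcne ?_⟩
      linear_combination -hk
    · exfalso
      rw [hme.neg_one_pow, hno.neg_one_pow] at hdc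
      have h2 : (c:ℤ) ∣ 2*s := by
        have hd2 := dvd_sub (dvd_mul_right c (2*s*b*(n:ℤ)^2 + 2*ρ*r*t*(n:ℤ) + 2*s*(m:ℤ)^2)) hdc
        have e3 : c * (2*s*b*(n:ℤ)^2 + 2*ρ*r*t*(n:ℤ) + 2*s*(m:ℤ)^2)
            - ((-1) * (s * (1 - 2*b*(n:ℤ)^2*c) - 2*ρ*r*t*c*(n:ℤ)) - 1 * (s * (1 - 2*(m:ℤ)^2*c)))
            = 2*s := by ring
        rwa [e3] at hd2
      have h3 : c ≤ 2*s := Int.le_of_dvd (by linarith only [hs]) h2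
      linarith only [h3, h2s]
    · exfalso
      rw [hmo.neg_one_pow, hne.neg_one_pow] at hdc
      have h2 : (c:ℤ) ∣ 2*s := by
        have hd2 := dvd_sub hdc (dvd_mul_right c (-(2*s*b*(n:ℤ)^2) - 2*ρ*r*t*(n:ℤ) - 2*s*(m:ℤ)^2))
        have e3 : ((1:ℤ) * (s * (1 - 2*b*(n:ℤ)^2*c) - 2*ρ*r*t*c*(n:ℤ)) - (-1) * (s * (1 - 2*(m:ℤ)^2*c)))
            - c * (-(2*s*b*(n:ℤ)^2) - 2*ρ*r*t*(n:ℤ) - 2*s*(m:ℤ)^2) = 2*s := by ring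
        rwa [e3] at hd2
      have h3 : c ≤ 2*s := Int.le_of_dvd (by linarith only [hs]) h2
      linarith only [h3, h2s]
    · rw [hmo.neg_one_pow, hno.neg_one_pow] at hdvd1
      obtain ⟨k, hk⟩ := hdvd1
      refine ⟨k, mul_left_cancel₀ hcne ?_⟩
      linear_combination hk
  -- the key divisibility c ∣ M with M = 2m² - 2bn² - ρn(b + (t-rs)²)
  have hM : (c:ℤ) ∣ (2*(m:ℤ)^2 - 2*b*(n:ℤ)^2 - ρ*(n:ℤ)*(b + (t-r*s)^2)) := by
    have h1 : (c:ℤ) ∣ s*(2*(s*b*(n:ℤ)^2 + ρ*r*t*(n:ℤ) - s*(m:ℤ)^2)) := hX.mul_left s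
    have h2 := dvd_sub h1 (dvd_mul_right c (2*(b*(n:ℤ)^2 - (m:ℤ)^2) + ρ*(n:ℤ)*(2*b-1)))
    have hQ : s*(2*(s*b*(n:ℤ)^2 + ρ*r*t*(n:ℤ) - s*(m:ℤ)^2))
        - c*(2*(b*(n:ℤ)^2 - (m:ℤ)^2) + ρ*(n:ℤ)*(2*b-1))
        = 2*(m:ℤ)^2 - 2*b*(n:ℤ)^2 - ρ*(n:ℤ)*(b + (t-r*s)^2) := by
      linear_combination (2*b*(n:ℤ)^2 - 2*(m:ℤ)^2) * hs2 + (ρ*(n:ℤ)) * ht2 + (ρ*(n:ℤ)) * hrs2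
    rwa [hQ] at h2
  -- size bounds
  have hn1 : (1:ℤ) ≤ (n:ℤ) := by exact_mod_cast hn
  have hm1 : (1:ℤ) ≤ (m:ℤ) := by exact_mod_cast hm
  have hmn' : (m:ℤ) ≤ 2*(n:ℤ) := by exact_mod_cast hmn
  have hm2 : (m:ℤ)^2 ≤ 4*(n:ℤ)^2 := by nlinarith only [hm1, hn1, hmn']
  have h16 : 16*b*(m:ℤ)^2 ≤ c := by
    have pp : (0:ℤ) ≤ b*(4*(n:ℤ)^2 - (m:ℤ)^2) := mul_nonneg hbpos.le (by linarith only [hm2])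
    linarith only [hn64, pp]
  have hF : (0:ℤ) < t - r*s := by linarith only [hrst]
  have hFid : (t-r*s)*((t-r*s) + 2*(r*s)) = b + c - 2 := by
    linear_combination ht2 - hrs2
  have hB4 : 4*(b-1)*(c-1)*(t-r*s)^2 < (b+c-2)^2 := by
    have e : (b+c-2)^2 = (t-r*s)^4 + 4*(r*s)*(t-r*s)^3 + 4*(r^2*s^2)*(t-r*s)^2 := by
      rw [← hFid]; ring
    rw [hrs2] at e
    have p1 : (0:ℤ) < (t-r*s)^4 := by positivity
    have p2 : (0:ℤ) < 4*(r*s)*(t-r*s)^3 := by positivity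
    linarith only [e, p1, p2]
  have hF2 : (0:ℤ) < (t-r*s)^2 := by positivity
  have hB5 : c < 4*b*(t-r*s)^2 := by
    have h2' : b+c-2 = (t-r*s)*(t + r*s) := by rw [← hFid]; ring
    have hts : t + r*s < 2*t := by linarith only [hrst]
    have htsp : (0:ℤ) < t + r*s := by positivity
    have hts2 : (t+r*s)^2 < 4*t^2 := by nlinarith only [hts, htsp]
    have h3 : (b+c-2)^2 < 4*t^2*(t-r*s)^2 := by
      rw [h2']
      have q := mul_lt_mul_of_pos_right hts2 hF2
      have e4 : ((t-r*s)*(t+r*s))^2 = (t+r*s)^2 * (t-r*s)^2 := by ring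
      rw [e4]; linarith only [q]
    rw [ht2] at h3
    have hcbc : c ≤ b+c-2 := by linarith only [hb2]
    have q2 : c*c ≤ (b+c-2)*(b+c-2) := mul_le_mul hcbc hcbc hcpos.le (by linarith only [hcbc, hcpos])
    have h5 : c^2 < 4*(b*c-1)*(t-r*s)^2 := by nlinarith only [h3, q2]
    by_contra hcon2
    push_neg at hcon2
    have q3 := mul_le_mul_of_nonneg_right hcon2 hcpos.le
    nlinarith only [h5, q3, hF2]
  have hnF : 64*(n:ℤ)*(t-r*s)^2 < 57*c := by
    have hd4 : 4*(b+c-2) ≤ 5*c - 9 := by linarith only [hc4b]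
    have hd40 : (0:ℤ) ≤ 4*(b+c-2) := by linarith only [hb2, hc9]
    have q0 := mul_self_le_mul_self hd40 hd4
    have h2 : 16*(b+c-2)^2 ≤ (5*c-9)^2 := by nlinarith only [q0]
    have q1 : (0:ℤ) ≤ (c-9)*c := mul_nonneg (by linarith only [hc9]) hcpos.le
    have h3 : 8*(5*c-9)^2 ≤ 228*c*(c-1) := by nlinarith only [q1, hc9]
    have h4 : 128*(b+c-2)^2 ≤ 228*c*(c-1) := by linarith only [h2, h3]
    have p1 : 64*b*(b+c-2)^2 ≤ 128*(b-1)*(b+c-2)^2 := by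
      have q := mul_nonneg (sq_nonneg (b+c-2)) (show (0:ℤ) ≤ 64*b-128 by linarith only [hb2])
      nlinarith only [q]
    have p2 : 128*(b-1)*(b+c-2)^2 ≤ 228*c*((b-1)*(c-1)) := by
      have q := mul_le_mul_of_nonneg_left h4 (show (0:ℤ) ≤ b-1 by linarith only [hb2])
      nlinarith only [q]
    have hpos : (0:ℤ) < 4*(b-1)*(c-1) := by
      have := mul_pos (show (0:ℤ) < 4*(b-1) by linarith only [hb2]) (show (0:ℤ) < c-1 by linarith only [hc9])
      linarith only [this]
    have hchain : 64*(n:ℤ)*(t-r*s)^2 * (4*(b-1)*(c-1)) < 57*c * (4*(b-1)*(c-1)) := by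
      have r0 : (0:ℤ) ≤ 64*(t-r*s)^2 * (4*(b-1)*(c-1)) := by positivity
      have q1' := mul_le_mul_of_nonneg_right hnb r0
      have q2' := mul_lt_mul_of_pos_left hB4 (show (0:ℤ) < 64*b by linarith only [hb2])
      nlinarith only [q1', q2', p1, p2]
    exact lt_of_mul_lt_mul_right hchain hpos.le
  -- auxiliary nonnegativity
  have hnn : (n:ℤ) ≤ (n:ℤ)^2 := by nlinarith only [hn1]
  have hbn2 : (0:ℤ) ≤ b*(n:ℤ)^2 := by positivity
  have hnb0 : (0:ℤ) ≤ (n:ℤ)*b := by positivity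
  have hnF0 : (0:ℤ) ≤ (n:ℤ)*(t-r*s)^2 := by positivity
  have hm20 : (0:ℤ) ≤ (m:ℤ)^2 := sq_nonneg _
  have hA : 32*(m:ℤ)^2 ≤ c := by
    have q := mul_nonneg (show (0:ℤ) ≤ b-2 by linarith only [hb2]) hm20
    linarith only [h16, q]
  have hCn : 64*((n:ℤ)*b) ≤ c := by
    have q := mul_nonneg (show (0:ℤ) ≤ 64*b by linarith only [hb2])
      (show (0:ℤ) ≤ (n:ℤ)^2 - (n:ℤ) by linarith only [hnn])
    nlinarith only [hn64, q]
  -- final case analysis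
  rcases hrho with hρ | hρ <;> subst hρ
  · -- ρ = 1 : M = 2m² - 2bn² - n(b + F²)
    have hM0 : 2*(m:ℤ)^2 - 2*b*(n:ℤ)^2 - 1*(n:ℤ)*(b + (t-r*s)^2) = 0 := by
      refine Int.eq_zero_of_abs_lt_dvd hM ?_
      rw [abs_lt]
      constructor
      · linarith only [hA, hn64, hCn, hnF, hm20, hbn2, hnb0, hnF0, hcpos]
      · linarith only [hA, hn64, hCn, hnF, hm20, hbn2, hnb0, hnF0, hcpos]
    have q : (n:ℤ)*(t-r*s)^2 ≤ 2*(m:ℤ)^2 := by linarith only [hM0, hbn2, hnb0]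
    have e1 : (t-r*s)^2 ≤ 2*(m:ℤ)^2 := by
      have q2 := mul_nonneg (show (0:ℤ) ≤ (n:ℤ)-1 by linarith only [hn1]) (sq_nonneg (t-r*s))
      nlinarith only [q, q2]
    have e2 : c < 8*b*(m:ℤ)^2 := by
      have q3 := mul_nonneg hbpos.le (show (0:ℤ) ≤ 2*(m:ℤ)^2 - (t-r*s)^2 by linarith only [e1])
      nlinarith only [hB5, q3]
    have e3 : (0:ℤ) < b*(m:ℤ)^2 := by positivity
    linarith only [h16, e2, e3]
  · -- ρ = -1 : M = 2m² - 2bn² + n(b + F²)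
    have hM0 : 2*(m:ℤ)^2 - 2*b*(n:ℤ)^2 - (-1)*(n:ℤ)*(b + (t-r*s)^2) = 0 := by
      refine Int.eq_zero_of_abs_lt_dvd hM ?_
      rw [abs_lt]
      constructor
      · linarith only [hA, hn64, hCn, hnF, hm20, hbn2, hnb0, hnF0, hcpos]
      · linarith only [hA, hn64, hCn, hnF, hm20, hbn2, hnb0, hnF0, hcpos]
    have q : (n:ℤ)*(t-r*s)^2 ≤ 2*b*(n:ℤ)^2 := by linarith only [hM0, hm20, hnb0]
    have hnpos : (0:ℤ) < (n:ℤ) := by linarith only [hn1]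
    have hf2 : (t-r*s)^2 ≤ 2*b*(n:ℤ) := by
      by_contra hcn
      push_neg at hcn
      have q4 := mul_lt_mul_of_pos_left hcn hnpos
      nlinarith only [q, q4]
    have h8 : c < 8*b^2*(n:ℤ) := by
      have q5 := mul_nonneg hbpos.le (show (0:ℤ) ≤ 2*b*(n:ℤ) - (t-r*s)^2 by linarith only [hf2])
      nlinarith only [hB5, q5]
    have g1 : c*c < (8*b^2*(n:ℤ))*(8*b^2*(n:ℤ)) :=
      mul_lt_mul'' h8 h8 hcpos.le hcpos.le
    have g2 : 64*b^4*(n:ℤ)^2 ≤ b^3*c := by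
      have q6 := mul_le_mul_of_nonneg_left hn64 (show (0:ℤ) ≤ b^3 by positivity)
      nlinarith only [q6]
    have g3 : b^3*c < c*c := mul_lt_mul_of_pos_right hcb hcpos
    nlinarith only [g1, g2, g3]
end

section
/- Let (1,b,c,d) with 1 < b < c < d be a Diophantine D(−1)-quadruple with 4b² < c < b³. Then n > 0.125·c/b², where n is the index of the solution in the second recurrent sequence, i.e. z = v_m = w_n. -/
private lemma int_lt_of_sq_lt_sq {x y : ℤ} (h : x^2 < y^2) (hy : 0 ≤ y) : x < y := by
  nlinarith [sq_nonneg (x + y), sq_nonneg (x - y)]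

private lemma int_le_of_sq_le_sq {x y : ℤ} (h : x^2 ≤ y^2) (hy : 0 ≤ y) : x ≤ y := by
  nlinarith [sq_nonneg (x + y), sq_nonneg (x - y)]

private lemma vcong (c s : ℤ) (v : ℕ → ℤ)
    (hv0 : v 0 = s) (hv1 : v 1 = (2*c-1)*s)
    (hv : ∀ i, v (i+2) = (4*c-2)*v (i+1) - v i) :
    ∀ i : ℕ, (4*c^2) ∣ v i - (-1)^i * (s * (1 - 2*(i:ℤ)^2*c)) := by
  intro i
  induction i using Nat.twoStepInduction with
  | zero => exact ⟨0, by simp [hv0]⟩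
  | one => exact ⟨0, by push_cast [hv1]; ring⟩
  | more k ih1 ih2 =>
    obtain ⟨a, ha⟩ := ih1
    obtain ⟨a', ha'⟩ := ih2
    refine ⟨(4*c-2)*a' - a + (-1)^k*(2*s*((k:ℤ)+1)^2), ?_⟩
    rw [hv k]
    push_cast at ha ha' ⊢
    linear_combination (4*c-2)*ha' - ha

private lemma wcong (b c s r t ρ : ℤ) (w : ℕ → ℤ)
    (hw0 : w 0 = s) (hw1 : w 1 = (2*b*c-1)*s + 2*ρ*r*t*c)
    (hw : ∀ i, w (i+2) = (4*b*c-2)*w (i+1) - w i) :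
    ∀ i : ℕ, (4*c^2) ∣ w i - (-1)^i * (s * (1 - 2*b*(i:ℤ)^2*c) - 2*ρ*r*t*(i:ℤ)*c) := by
  intro i
  induction i using Nat.twoStepInduction with
  | zero => exact ⟨0, by simp [hw0]⟩
  | one => exact ⟨0, by push_cast [hw1]; ring⟩
  | more k ih1 ih2 =>
    obtain ⟨a, ha⟩ := ih1
    obtain ⟨a', ha'⟩ := ih2
    refine ⟨(4*b*c-2)*a' - a + (-1)^k*(2*s*b^2*((k:ℤ)+1)^2 + 2*ρ*r*t*b*((k:ℤ)+1)), ?_⟩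
    rw [hw k]
    push_cast at ha ha' ⊢
    linear_combination (4*b*c-2)*ha' - ha

set_option maxHeartbeats 1000000 in
/-- If 4b² < c < b³ then n > 0.125·c/b². -/
theorem stmt10 (b c d r s t z ρ : ℤ)
    (hb : 1 < b) (hbc : b < c) (hcd : c < d)
    (hsq3 : IsSquare (d - 1)) (hsq5 : IsSquare (b * d - 1))
    (hr : 0 < r) (hs : 0 < s) (ht : 0 < t) (hz : 0 < z)
    (hbr : b - 1 = r ^ 2) (hcs : c - 1 = s ^ 2) (hbct : b * c - 1 = t ^ 2)
    (hcdz : c * d - 1 = z ^ 2)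
    (hrho : ρ = 1 ∨ ρ = -1)
    (v w : ℕ → ℤ)
    (hv0 : v 0 = s) (hv1 : v 1 = (2 * c - 1) * s)
    (hv : ∀ i, v (i + 2) = (4 * c - 2) * v (i + 1) - v i)
    (hw0 : w 0 = s) (hw1 : w 1 = (2 * b * c - 1) * s + 2 * ρ * r * t * c)
    (hw : ∀ i, w (i + 2) = (4 * b * c - 2) * w (i + 1) - w i)
    (m n : ℕ) (hm : 0 < m) (hn : 0 < n)
    (hzv : z = v m) (hzw : z = w n)
    (hc1 : 4 * b ^ 2 < c) (hc2 : c < b ^ 3) :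
    (n : ℝ) > 0.125 * (c : ℝ) / (b : ℝ) ^ 2 := by
  have hb0 : (0:ℤ) < b := by linarith
  have hc0 : (0:ℤ) < c := by linarith
  have hb5 : 5 ≤ b := by
    by_contra hle
    push_neg at hle
    have h4 : b ≤ 4 := by linarith
    have : b^3 ≤ 4*b^2 := by linarith [mul_le_mul_of_nonneg_right h4 (sq_nonneg b)]
    linarith
  have hc101 : 101 ≤ c := by
    linarith [mul_le_mul hb5 hb5 (by linarith) (by linarith), hc1]
  have hN1 : 1 ≤ (n:ℤ) := by exact_mod_cast hn
  have hM1 : 1 ≤ (m:ℤ) := by exact_mod_cast hm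
  have hvw : v m = w n := by rw [← hzv, ← hzw]
  -- basic square identities
  have ht2 : t^2 = (r^2+1)*(s^2+1) - 1 := by
    have hb' : b = r^2 + 1 := by linarith
    have hc' : c = s^2 + 1 := by linarith
    rw [← hb', ← hc']; linarith
  have hrt2 : r^2*t^2 = (b-1)*(b*c-1) := by rw [← hbr, ← hbct]
  have hrtbs : r*t ≤ b*s := by
    have hbb : b^2 + b ≤ b*c := by
      linarith [mul_le_mul_of_nonneg_left (show b+1 ≤ c by linarith) (by linarith : (0:ℤ) ≤ b)]
    have hcsb : b^2*s^2 = b^2*c - b^2 := by linear_combination (-b^2)*hcs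
    have h1 : (r*t)^2 ≤ (b*s)^2 := by linarith [hrt2, hcsb, hbb]
    exact int_le_of_sq_le_sq h1 (by positivity)
  -- f and its identities
  set f : ℤ := t - r*s with hf
  have h2frs : 2*f*r*s = r^2 + s^2 - f^2 := by rw [hf]; linear_combination ht2
  have hfid : 4*(b-1)*(c-1)*f^2 = (b+c-2-f^2)^2 := by
    linear_combination (2*f*r*s + (r^2+s^2-f^2))*h2frs
      + (4*f^2*(b-1) - (b+c-2-f^2) - (r^2+s^2-f^2))*hcs
      + (4*f^2*s^2 - (b+c-2-f^2) - (r^2+s^2-f^2))*hbr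
  have hfsum : 2*f*r*s = b+c-2-f^2 := by linear_combination h2frs - hbr - hcs
  have hf1 : 1 ≤ f := by
    have hlt : r*s < t := by
      apply int_lt_of_sq_lt_sq _ (le_of_lt ht)
      linarith [ht2, mul_pos hr hr, mul_pos hs hs]
    rw [hf]; linarith
  -- monotonicity and positivity of v
  have hvA : ∀ i, 0 < v i ∧ v i ≤ v (i+1) := by
    intro i
    induction i using Nat.twoStepInduction with
    | zero =>
      refine ⟨by rw [hv0]; exact hs, ?_⟩
      have e : v 1 = (2*c-1)*s := hv1
      rw [hv0, e]
      linarith [mul_nonneg (by linarith : (0:ℤ) ≤ 2*c-2) hs.le]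
    | one =>
      have e2 : v 2 = (4*c-2)*v 1 - v 0 := hv 0
      refine ⟨by rw [hv1]; exact mul_pos (by linarith) hs, ?_⟩
      rw [e2, hv0, hv1]
      have hq : (0:ℤ) ≤ 2*((4*c-1)*(c-1)) :=
        mul_nonneg (by norm_num) (mul_nonneg (by linarith) (by linarith))
      linarith [mul_nonneg hq hs.le]
    | more k ih1 ih2 =>
      obtain ⟨hk1pos, hk1le⟩ := ih2
      have hk2pos : 0 < v (k+2) := lt_of_lt_of_le hk1pos hk1le
      refine ⟨hk2pos, ?_⟩
      have e : v (k+2+1) = (4*c-2)*v (k+2) - v (k+1) := hv (k+1)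
      rw [e]
      linarith [hk1le, mul_pos (by linarith : (0:ℤ) < 4*c-4) hk2pos]
  have hvmono : Monotone v := monotone_nat_of_le_succ (fun i => (hvA i).2)
  have hvlow : ∀ k : ℕ, (4*c-3)^k * ((2*c-1)*s) ≤ v (k+1) := by
    intro k
    induction k with
    | zero => rw [hv1]; simp
    | succ j ih =>
      have h2 : (4*c-3)*((4*c-3)^j * ((2*c-1)*s)) ≤ (4*c-3)*v (j+1) :=
        mul_le_mul_of_nonneg_left ih (by linarith)
      have e : v (j+1+1) = (4*c-2)*v (j+1) - v j := hv j
      calc (4*c-3)^(j+1) * ((2*c-1)*s) = (4*c-3)*((4*c-3)^j * ((2*c-1)*s)) := by ring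
        _ ≤ (4*c-3)*v (j+1) := h2
        _ ≤ (4*c-2)*v (j+1) - v j := by linarith [(hvA j).2, (hvA (j+1)).1]
        _ = v (j+1+1) := e.symm
  -- positivity and growth of w
  have hbc1pos : (0:ℤ) < b*c - 1 := by
    linarith [mul_le_mul (show (2:ℤ) ≤ b by linarith) hc101 (by linarith) (by linarith)]
  have hw1pos : 0 < w 1 := by
    rw [hw1]
    rcases hrho with h | h <;> subst h
    · linarith [mul_pos (mul_pos hr ht) hc0, mul_pos hbc1pos hs]
    · have hbb : b^2 + 1 ≤ b*c := by
        linarith [mul_le_mul_of_nonneg_left (show b+1 ≤ c by linarith) (by linarith : (0:ℤ) ≤ b), hb0]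
      have e1 : ((2*b*c-1)*s)^2 - (2*r*t*c)^2 = 4*c^2*(b*c - b^2 - 1) + 4*b*c + c - 1 := by
        linear_combination (-(2*b*c-1)^2)*hcs - 4*c^2*hrt2
      have hpos : (0:ℤ) < ((2*b*c-1)*s)^2 - (2*r*t*c)^2 := by
        rw [e1]
        linarith [mul_nonneg (sq_nonneg c) (by linarith : (0:ℤ) ≤ b*c - b^2 - 1), mul_pos hb0 hc0]
      have hlt : 2*r*t*c < (2*b*c-1)*s := by
        apply int_lt_of_sq_lt_sq (by linarith) (by linarith [mul_pos hbc1pos hs])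
      linarith
  have hw0le1 : w 0 ≤ w 1 := by
    rw [hw0, hw1]
    rcases hrho with h | h <;> subst h
    · linarith [mul_pos (mul_pos hr ht) hc0, mul_pos hbc1pos hs]
    · have e1 : ((b*c-1)*s)^2 - (r*t*c)^2 = (b*c-1)*(c^2 - b*c - c + 1) := by
        linear_combination (-(b*c-1)^2)*hcs - c^2*hrt2
      have h1 : (0:ℤ) < c^2 - b*c - c + 1 := by
        linarith [mul_nonneg hc0.le (show (0:ℤ) ≤ c - b - 1 by linarith)]
      have hpos : (0:ℤ) < ((b*c-1)*s)^2 - (r*t*c)^2 := by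
        rw [e1]; exact mul_pos hbc1pos h1
      have hlt : r*t*c < (b*c-1)*s := by
        apply int_lt_of_sq_lt_sq (by linarith) (by linarith [mul_pos hbc1pos hs])
      linarith [hlt]
  have hwA : ∀ i, 0 < w i ∧ w i ≤ w (i+1) := by
    intro i
    induction i using Nat.twoStepInduction with
    | zero => exact ⟨by rw [hw0]; exact hs, hw0le1⟩
    | one =>
      have e2 : w 2 = (4*b*c-2)*w 1 - w 0 := hw 0
      refine ⟨hw1pos, ?_⟩
      rw [e2, hw0]
      have hsw1 : s ≤ w 1 := by rw [← hw0]; exact hw0le1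
      linarith [hsw1, mul_pos (by linarith [hbc1pos] : (0:ℤ) < 4*b*c-4) hw1pos]
    | more k ih1 ih2 =>
      obtain ⟨hk1pos, hk1le⟩ := ih2
      have hk2pos : 0 < w (k+2) := lt_of_lt_of_le hk1pos hk1le
      refine ⟨hk2pos, ?_⟩
      have e : w (k+2+1) = (4*b*c-2)*w (k+2) - w (k+1) := hw (k+1)
      rw [e]
      linarith [hk1le, mul_pos (by linarith [hbc1pos] : (0:ℤ) < 4*b*c-4) hk2pos]
  have hwstep : ∀ k : ℕ, w (k+1) ≤ (4*b*c) * w k := by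
    intro k
    cases k with
    | zero =>
      rw [hw0, hw1]
      rcases hrho with h | h <;> subst h <;>
        linarith [mul_pos (mul_pos hr ht) hc0, mul_pos hbc1pos hs, hs,
          mul_le_mul_of_nonneg_left hrtbs (by linarith : (0:ℤ) ≤ 2*c), mul_pos (mul_pos hb0 hc0) hs]
    | succ j =>
      have e : w (j+1+1) = (4*b*c-2)*w (j+1) - w j := hw j
      rw [e]
      linarith [(hwA j).1, (hwA (j+1)).1]
  have hwub : ∀ k : ℕ, w k ≤ (4*b*c)^k * s := by
    intro k
    induction k with
    | zero => rw [hw0]; simp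
    | succ j ih =>
      calc w (j+1) ≤ (4*b*c) * w j := hwstep j
        _ ≤ (4*b*c) * ((4*b*c)^j * s) := mul_le_mul_of_nonneg_left ih (by positivity)
        _ = (4*b*c)^(j+1) * s := by ring
  -- m ≤ 2n
  have hm2n : m ≤ 2*n := by
    by_contra hgt
    push_neg at hgt
    have h1 : v (2*n+1) ≤ v m := hvmono (by omega)
    have h2 : (4*c-3)^(2*n) * ((2*c-1)*s) ≤ v (2*n+1) := hvlow (2*n)
    have h3 : w n ≤ (4*b*c)^n * s := hwub n
    have hbase : 4*b*c + 1 ≤ (4*c-3)^2 := by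
      linarith [mul_lt_mul_of_pos_right hbc hc0, mul_le_mul_of_nonneg_right hc101 hc0.le, hc101]
    have h4 : (4*b*c+1)^n ≤ ((4*c-3)^2)^n :=
      pow_le_pow_left₀ (by positivity) hbase n
    have h5 : (4*b*c)^n < (4*b*c+1)^n := by
      apply pow_lt_pow_left₀ (by linarith) (by positivity) hn.ne'
    have h6 : ((4*c-3)^2)^n * s ≤ ((4*c-3)^2)^n * ((2*c-1)*s) := by
      apply mul_le_mul_of_nonneg_left _ (by positivity)
      linarith [mul_nonneg (by linarith : (0:ℤ) ≤ 2*c-2) hs.le]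
    have h7 : ((4*c-3)^2)^n = (4*c-3)^(2*n) := by rw [← pow_mul]
    have h8 : (4*b*c)^n * s < (4*c-3)^(2*n) * ((2*c-1)*s) := by
      calc (4*b*c)^n * s < (4*b*c+1)^n * s := by
            apply mul_lt_mul_of_pos_right h5 hs
        _ ≤ ((4*c-3)^2)^n * s := mul_le_mul_of_nonneg_right h4 hs.le
        _ ≤ ((4*c-3)^2)^n * ((2*c-1)*s) := h6
        _ = (4*c-3)^(2*n) * ((2*c-1)*s) := by rw [h7]
    linarith [hvw ▸ h1, h2, h3, h8]
  -- reduce to integer inequality, by contradiction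
  by_contra hcon
  push_neg at hcon
  have hbR : (0:ℝ) < (b:ℝ)^2 := by positivity
  have hA : 8*b^2*(n:ℤ) ≤ c := by
    have h1 : (n:ℝ)*(b:ℝ)^2 ≤ 0.125*(c:ℝ) := by
      calc (n:ℝ)*(b:ℝ)^2 ≤ (0.125*(c:ℝ)/(b:ℝ)^2)*(b:ℝ)^2 :=
            mul_le_mul_of_nonneg_right hcon hbR.le
        _ = 0.125*(c:ℝ) := by field_simp
    have h2 : ((8*b^2*(n:ℤ) : ℤ) : ℝ) ≤ ((c : ℤ) : ℝ) := by
      push_cast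
      linarith [h1]
    exact_mod_cast h2
  have hN0 : (0:ℤ) < (n:ℤ) := by linarith
  have hnb : 8*(n:ℤ) < b := by
    have h3 : 8*(n:ℤ)*b^2 < b*b^2 := by
      have h4 : (8*b^2*(n:ℤ)) < b^3 := lt_of_le_of_lt hA hc2
      calc 8*(n:ℤ)*b^2 = 8*b^2*(n:ℤ) := by ring
        _ < b^3 := h4
        _ = b*b^2 := by ring
    exact lt_of_mul_lt_mul_right h3 (by positivity)
  have hb9 : 9 ≤ b := by linarith
  -- congruence lemmas
  have hVC := vcong c s v hv0 hv1 hv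
  have hWC := wcong b c s r t ρ w hw0 hw1 hw
  have hd0 : (4*c^2 : ℤ) ∣ ((-1)^m * (s * (1 - 2*(m:ℤ)^2*c))
      - (-1)^n * (s * (1 - 2*b*(n:ℤ)^2*c) - 2*ρ*r*t*(n:ℤ)*c)) := by
    have h1 := hVC m
    have h2 := hWC n
    rw [hvw] at h1
    have e : (-1:ℤ)^m * (s * (1 - 2*(m:ℤ)^2*c))
        - (-1)^n * (s * (1 - 2*b*(n:ℤ)^2*c) - 2*ρ*r*t*(n:ℤ)*c)
        = (w n - (-1)^n * (s * (1 - 2*b*(n:ℤ)^2*c) - 2*ρ*r*t*(n:ℤ)*c))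
          - (w n - (-1)^m * (s * (1 - 2*(m:ℤ)^2*c))) := by ring
    rw [e]
    exact dvd_sub h2 h1
  have hcd0 : (c : ℤ) ∣ ((-1)^m * (s * (1 - 2*(m:ℤ)^2*c))
      - (-1)^n * (s * (1 - 2*b*(n:ℤ)^2*c) - 2*ρ*r*t*(n:ℤ)*c)) :=
    dvd_trans ⟨4*c, by ring⟩ hd0
  have hP2 : ((-1:ℤ)^n)*((-1:ℤ)^n) = 1 := by
    rcases Nat.even_or_odd n with h|h
    · rw [h.neg_one_pow]; norm_num
    · rw [h.neg_one_pow]; norm_num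
  have h2sc : 2*s < c := by
    have h5 : (2*s)^2 < c^2 := by
      have h6 : 0 < (c-2)*(c-2) := mul_pos (by linarith) (by linarith)
      linarith [hcs, h6]
    exact int_lt_of_sq_lt_sq h5 hc0.le
  -- parity of m and n must agree
  have hpar : ((-1:ℤ))^m = (-1)^n := by
    by_contra hne
    have hcases : ((-1:ℤ))^m = -(-1:ℤ)^n := by
      rcases Nat.even_or_odd m with hm'|hm' <;> rcases Nat.even_or_odd n with hn'|hn' <;>
        simp [hm'.neg_one_pow, hn'.neg_one_pow] at hne ⊢
    rw [hcases] at hcd0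
    have h7 : (c:ℤ) ∣ (-1:ℤ)^n * (2*s) := by
      have h8 : (-1:ℤ)^n * (2*s)
          = c*((-1:ℤ)^n*(2*(m:ℤ)^2*s + 2*b*(n:ℤ)^2*s + 2*ρ*r*t*(n:ℤ)))
            - (-(-1:ℤ)^n * (s * (1 - 2*(m:ℤ)^2*c))
              - (-1)^n * (s * (1 - 2*b*(n:ℤ)^2*c) - 2*ρ*r*t*(n:ℤ)*c)) := by ring
      rw [h8]
      exact dvd_sub ⟨_, rfl⟩ hcd0
    have h9 : (c:ℤ) ∣ 2*s := by
      have h10 := h7.mul_left ((-1:ℤ)^n)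
      rwa [show (-1:ℤ)^n*((-1:ℤ)^n*(2*s)) = 2*s by rw [← mul_assoc, hP2, one_mul]] at h10
    have h11 := Int.le_of_dvd (by linarith) h9
    linarith
  -- c divides E
  have hE : (c:ℤ) ∣ (s*(m:ℤ)^2 - s*b*(n:ℤ)^2 - ρ*r*t*(n:ℤ)) := by
    obtain ⟨k, hk⟩ := hd0
    rw [hpar] at hk
    have h6 : (2*c)*((-1:ℤ)^n*(s*(m:ℤ)^2 - s*b*(n:ℤ)^2 - ρ*r*t*(n:ℤ)))
        = (2*c)*(-(2*c*k)) := by linear_combination -hk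
    have h7 := mul_left_cancel₀ (show (2*c:ℤ) ≠ 0 by linarith) h6
    refine ⟨(-1:ℤ)^n*(-(2*k)), ?_⟩
    calc s*(m:ℤ)^2 - s*b*(n:ℤ)^2 - ρ*r*t*(n:ℤ)
        = (-1:ℤ)^n*((-1:ℤ)^n*(s*(m:ℤ)^2 - s*b*(n:ℤ)^2 - ρ*r*t*(n:ℤ))) := by
          rw [← mul_assoc, hP2, one_mul]
      _ = (-1:ℤ)^n*(-(2*c*k)) := by rw [h7]
      _ = c*((-1:ℤ)^n*(-(2*k))) := by ring
  -- c divides Y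
  have hYeq : 2*(m:ℤ)^2 - 2*b*(n:ℤ)^2 - ρ*(b + f^2)*(n:ℤ)
      = c*(2*(m:ℤ)^2 - 2*b*(n:ℤ)^2 - 2*ρ*b*(n:ℤ) + ρ*(n:ℤ))
        - 2*s*(s*(m:ℤ)^2 - s*b*(n:ℤ)^2 - ρ*r*t*(n:ℤ)) := by
    rw [hf]
    linear_combination (2*b*(n:ℤ)^2 - 2*(m:ℤ)^2 + ρ*(n:ℤ)*(b-1))*hcs
      + (ρ*(n:ℤ))*hbct + (ρ*(n:ℤ)*s^2)*hbr
  have hcY : (c:ℤ) ∣ (2*(m:ℤ)^2 - 2*b*(n:ℤ)^2 - ρ*(b + f^2)*(n:ℤ)) := by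
    obtain ⟨e0, he0⟩ := hE
    exact ⟨(2*(m:ℤ)^2 - 2*b*(n:ℤ)^2 - 2*ρ*b*(n:ℤ) + ρ*(n:ℤ)) - 2*s*e0,
      by rw [hYeq, he0]; ring⟩
  -- size bounds
  have hM2n : (m:ℤ) ≤ 2*(n:ℤ) := by exact_mod_cast hm2n
  have hM2 : (m:ℤ)^2 ≤ 4*(n:ℤ)^2 := by
    have := mul_le_mul hM2n hM2n (by linarith) (by linarith)
    linarith [this]
  have hfub : (b-1)*f^2 ≤ c := by
    have hfpos : (0:ℤ) < 2*f*r*s := mul_pos (mul_pos (by linarith) hr) hs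
    have hx : 0 ≤ b+c-2-f^2 := by linarith [hfsum]
    have hy : b+c-2-f^2 ≤ b+c-2 := by
      have := mul_le_mul hf1 hf1 (by linarith) (by linarith)
      linarith [this]
    have h9 : (b+c-2-f^2)^2 ≤ (b+c-2)^2 := pow_le_pow_left₀ hx hy 2
    have h2b : 2*b < c := by
      linarith [mul_pos hb0 (show (0:ℤ) < 2*b-1 by linarith), hc1]
    have hb2c : b^2 < c := by linarith [hc1, sq_nonneg b]
    have hbc2 : 2*b*c < c*c := by
      have := mul_lt_mul_of_pos_right h2b hc0
      linarith [this]
    have hcc : 101*c ≤ c*c := mul_le_mul_of_nonneg_right hc101 hc0.le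
    have h10 : (b+c-2)^2 ≤ 4*c*(c-1) := by linarith [hb2c, hbc2, hcc, hc101, hb0]
    have h11 : 4*(b-1)*(c-1)*f^2 ≤ 4*c*(c-1) := by rw [hfid]; linarith
    have h12 : (4*(c-1))*((b-1)*f^2) ≤ (4*(c-1))*c := by linarith [h11]
    exact le_of_mul_le_mul_left h12 (by linarith)
  have h8f : 8*f^2 ≤ 9*b^2 := by
    have h15 : 9*b^2 ≤ b*b^2 := mul_le_mul_of_nonneg_right hb9 (sq_nonneg b)
    have h16 : (b-1)*(8*f^2) ≤ (b-1)*(9*b^2) := by linarith [hfub, hc2, h15]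
    exact le_of_mul_le_mul_left h16 (by linarith)
  have hbf2N : 0 ≤ (b + f^2)*(n:ℤ) :=
    mul_nonneg (by linarith [sq_nonneg f]) (by linarith)
  have hsum : 2*(m:ℤ)^2 + 2*b*(n:ℤ)^2 + (b + f^2)*(n:ℤ) < c := by
    have h17 : 16*b*(n:ℤ) ≤ 2*b*(b-1) := by
      have := mul_le_mul_of_nonneg_left (show 8*(n:ℤ) ≤ b-1 by linarith)
        (show (0:ℤ) ≤ 2*b by linarith)
      linarith [this]
    have hb2 : 9*b ≤ b*b := mul_le_mul_of_nonneg_right hb9 hb0.le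
    have h20 : 8*(n:ℤ) + 2*b*(n:ℤ) + b + f^2 < 8*b^2 := by
      linarith [h17, h8f, hnb, hb2]
    have h19 : (8*(n:ℤ) + 2*b*(n:ℤ) + b + f^2)*(n:ℤ) < (8*b^2)*(n:ℤ) :=
      mul_lt_mul_of_pos_right h20 hN0
    have h21 : 2*(m:ℤ)^2 ≤ 8*(n:ℤ)*(n:ℤ) := by linarith [hM2]
    linarith [h19, h21, hA]
  have hρb : ρ*((b + f^2)*(n:ℤ)) ≤ (b + f^2)*(n:ℤ)
      ∧ -((b + f^2)*(n:ℤ)) ≤ ρ*((b + f^2)*(n:ℤ)) := by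
    rcases hrho with h|h <;> subst h <;> constructor <;> linarith [hbf2N]
  have hbN2 : 0 ≤ 2*b*(n:ℤ)^2 := by positivity
  have hYlt : 2*(m:ℤ)^2 - 2*b*(n:ℤ)^2 - ρ*(b + f^2)*(n:ℤ) < c := by
    have := hρb.2
    linarith [hsum, hbN2, this]
  have hYgt : -c < 2*(m:ℤ)^2 - 2*b*(n:ℤ)^2 - ρ*(b + f^2)*(n:ℤ) := by
    have := hρb.1
    linarith [hsum, sq_nonneg (m:ℤ), this]
  have hY0 : 2*(m:ℤ)^2 - 2*b*(n:ℤ)^2 - ρ*(b + f^2)*(n:ℤ) = 0 := by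
    rcases hcY with ⟨u, hu⟩
    rcases lt_trichotomy u 0 with h|h|h
    · have h30 : u ≤ -1 := by linarith
      have h31 : c*u ≤ c*(-1) := mul_le_mul_of_nonneg_left h30 hc0.le
      rw [hu] at hYgt
      linarith
    · rw [hu, h, mul_zero]
    · have h30 : 1 ≤ u := by linarith
      have h31 : c*1 ≤ c*u := mul_le_mul_of_nonneg_left h30 hc0.le
      rw [hu] at hYlt
      linarith
  -- final contradiction
  have hN2 : 1 ≤ (n:ℤ)^2 := by
    have := mul_le_mul hN1 hN1 (by norm_num) (by linarith)
    linarith [this]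
  have hMsq : 1 ≤ (m:ℤ)^2 := by
    have := mul_le_mul hM1 hM1 (by norm_num) (by linarith)
    linarith [this]
  rcases hrho with h|h <;> subst h
  · -- ρ = 1
    have h22 : 9*(n:ℤ)^2 ≤ b*(n:ℤ)^2 :=
      mul_le_mul_of_nonneg_right hb9 (sq_nonneg (n:ℤ))
    linarith [hY0, hM2, h22, hbf2N, hN2]
  · -- ρ = -1
    have h24 : f^2*(n:ℤ) < (2*b*(n:ℤ))*(n:ℤ) := by
      have hbN : 0 < b*(n:ℤ) := mul_pos hb0 hN0
      linarith [hY0, hMsq, hbN]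
    have h25 : f^2 < 2*b*(n:ℤ) := lt_of_mul_lt_mul_right h24 (by linarith)
    have hflb : c < 4*b*f^2 := by
      by_contra hge
      push_neg at hge
      have q1 : 4*b^2 + 4*b*c - 8*b - c ≤ 4*b*(b+c-2-f^2) := by linarith [hge]
      have q2 : (4*b-1)*c ≤ 4*b^2 + 4*b*c - 8*b - c := by
        have : 2*b ≤ b*b := mul_le_mul_of_nonneg_right (show (2:ℤ) ≤ b by linarith) hb0.le
        linarith [this]
      have q3 : 0 ≤ (4*b-1)*c := mul_nonneg (by linarith) hc0.le
      have q4 : ((4*b-1)*c)^2 ≤ (4*b*(b+c-2-f^2))^2 :=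
        pow_le_pow_left₀ q3 (by linarith [q1, q2]) 2
      have q5 : (4*b*(b+c-2-f^2))^2 = 16*b^2*(4*(b-1)*(c-1)*f^2) := by
        linear_combination (-(16*b^2))*hfid
      have hnn : (0:ℤ) ≤ 16*b*(b-1)*(c-1) :=
        mul_nonneg (mul_nonneg (by linarith) (by linarith)) (by linarith)
      have q6 : 16*b^2*(4*(b-1)*(c-1)*f^2) ≤ 16*b*(b-1)*(c-1)*c := by
        have := mul_le_mul_of_nonneg_left hge hnn
        linarith [this]
      have q8 : 0 < c*(8*b*c + c + 16*b^2 - 16*b) := by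
        apply mul_pos hc0
        have hbb2 : b ≤ b*b := by
          have := mul_le_mul_of_nonneg_right (show (1:ℤ) ≤ b by linarith) hb0.le
          linarith [this]
        linarith [mul_pos hb0 hc0, hbb2, hc0]
      linarith [q4, q5, q6, q8]
    have h26 : 4*b*f^2 < (4*b)*(2*b*(n:ℤ)) := mul_lt_mul_of_pos_left h25 (by linarith)
    linarith [hflb, h26, hA]
end

section
/- Let r, s, f be positive integers with r < s satisfying the master equation r² + s² = 2frs + f². Then the following chains of equivalences hold: s = 2rf ⟺ f = r ⟺ s = 2r² ⟺ s = 2f²; s > 2rf ⟺ f > r ⟺ s > 2r² ⟺ s < 2f²; and s < 2rf ⟺ f < r ⟺ s < 2r² ⟺ s > 2f². -/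
/-- If `a * x = y * b` with `a, b > 0`, then `x` and `y` have the same sign. -/
lemma sign_transfer (a b x y : ℤ) (ha : 0 < a) (hb : 0 < b) (h : a * x = y * b) :
    (0 < x ↔ 0 < y) ∧ (x = 0 ↔ y = 0) ∧ (x < 0 ↔ y < 0) := by
  refine ⟨⟨fun hx => ?_, fun hy => ?_⟩, ⟨fun hx => ?_, fun hy => ?_⟩,
    ⟨fun hx => ?_, fun hy => ?_⟩⟩
  · nlinarith [mul_pos ha hx]
  · nlinarith [mul_pos hy hb]
  · have h0 : y * b = 0 := by rw [← h, hx, mul_zero]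
    rcases mul_eq_zero.mp h0 with h' | h'
    · exact h'
    · exact absurd h' hb.ne'
  · have h0 : a * x = 0 := by rw [h, hy, zero_mul]
    rcases mul_eq_zero.mp h0 with h' | h'
    · exact absurd h' ha.ne'
    · exact h'
  · nlinarith [mul_pos ha (neg_pos.mpr hx)]
  · nlinarith [mul_pos (neg_pos.mpr hy) hb]

/-- Equivalences for solutions of the master equation r² + s² = 2frs + f². -/
theorem stmt14 (r s f : ℤ) (hr : 0 < r) (hs : 0 < s) (hf : 0 < f) (hrs : r < s)
    (hme : r ^ 2 + s ^ 2 = 2 * f * r * s + f ^ 2) :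
    ((s = 2 * r * f ↔ f = r) ∧ (f = r ↔ s = 2 * r ^ 2) ∧
      (s = 2 * r ^ 2 ↔ s = 2 * f ^ 2)) ∧
    ((s > 2 * r * f ↔ f > r) ∧ (f > r ↔ s > 2 * r ^ 2) ∧
      (s > 2 * r ^ 2 ↔ s < 2 * f ^ 2)) ∧
    ((s < 2 * r * f ↔ f < r) ∧ (f < r ↔ s < 2 * r ^ 2) ∧
      (s < 2 * r ^ 2 ↔ s > 2 * f ^ 2)) := by
  have hfs : f < s := by nlinarith [mul_pos hr hs, mul_pos hf hs]
  have hb1 : (0:ℤ) < f + r := by linarith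
  have hb2 : (0:ℤ) < f + r + 2 * r * s := by nlinarith [mul_pos hr hs]
  have hb3 : (0:ℤ) < 2 * f * s - r - f := by nlinarith [mul_pos hf hs]
  have id1 : s * (s - 2 * r * f) = (f - r) * (f + r) := by linear_combination hme
  have id2 : s * (s - 2 * r ^ 2) = (f - r) * (f + r + 2 * r * s) := by
    linear_combination hme
  have id3 : s * (2 * f ^ 2 - s) = (f - r) * (2 * f * s - r - f) := by
    linear_combination -hme
  obtain ⟨p1, e1, n1⟩ := sign_transfer s (f + r) (s - 2 * r * f) (f - r) hs hb1 id1
  obtain ⟨p2, e2, n2⟩ := sign_transfer s (f + r + 2 * r * s) (s - 2 * r ^ 2) (f - r)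
    hs hb2 id2
  obtain ⟨p3, e3, n3⟩ := sign_transfer s (2 * f * s - r - f) (2 * f ^ 2 - s) (f - r)
    hs hb3 id3
  constructor
  · refine ⟨⟨fun h => ?_, fun h => ?_⟩, ⟨fun h => ?_, fun h => ?_⟩,
      ⟨fun h => ?_, fun h => ?_⟩⟩
    · have := e1.mp (by linarith); linarith
    · have := e1.mpr (by linarith); linarith
    · have := e2.mpr (by linarith); linarith
    · have := e2.mp (by linarith); linarith
    · have hfr := e2.mp (by linarith); have := e3.mpr (by linarith); linarith
    · have hfr := e3.mp (by linarith); have := e2.mpr (by linarith); linarith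
  constructor
  · refine ⟨⟨fun h => ?_, fun h => ?_⟩, ⟨fun h => ?_, fun h => ?_⟩,
      ⟨fun h => ?_, fun h => ?_⟩⟩
    · have := p1.mp (by linarith); linarith
    · have := p1.mpr (by linarith); linarith
    · have := p2.mpr (by linarith); linarith
    · have := p2.mp (by linarith); linarith
    · have hfr := p2.mp (by linarith); have := p3.mpr (by linarith); linarith
    · have hfr := p3.mp (by linarith); have := p2.mpr (by linarith); linarith
  · refine ⟨⟨fun h => ?_, fun h => ?_⟩, ⟨fun h => ?_, fun h => ?_⟩,
      ⟨fun h => ?_, fun h => ?_⟩⟩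
    · have := n1.mp (by linarith); linarith
    · have := n1.mpr (by linarith); linarith
    · have := n2.mpr (by linarith); linarith
    · have := n2.mp (by linarith); linarith
    · have hfr := n2.mp (by linarith); have := n3.mpr (by linarith); linarith
    · have hfr := n3.mp (by linarith); have := n2.mpr (by linarith); linarith
end

section
/- Let r, s, f be positive integers with r < s satisfying the master equation r² + s² = 2frs + f², and set F = s − 2rf (an integer). (a) If f > r, then f > 2rF ≥ 2r (in particular F ≥ 1). (b) If f < r, then 0 > F > −2fr. -/
/-- Bounds for F = s − 2rf for solutions of the master equation. -/
theorem stmt15 (r s f F : ℤ) (hr : 0 < r) (hs : 0 < s) (hf : 0 < f) (hrs : r < s)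
    (hme : r ^ 2 + s ^ 2 = 2 * f * r * s + f ^ 2)
    (hF : F = s - 2 * r * f) :
    (f > r → f > 2 * r * F ∧ 2 * r * F ≥ 2 * r ∧ 1 ≤ F) ∧
    (f < r → 0 > F ∧ F > -(2 * f * r)) := by
  have key : F * s = f ^ 2 - r ^ 2 := by
    rw [hF]; linear_combination hme
  constructor
  · intro h
    have hFpos : 0 < F := by
      by_contra hc
      push_neg at hc
      nlinarith [key]
    have hF1 : 1 ≤ F := hFpos
    refine ⟨?_, by nlinarith, hF1⟩
    have hsF : s = F + 2 * r * f := by omega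
    nlinarith [key, mul_pos hf hFpos, mul_pos hr (mul_pos hr hr)]
  · intro h
    have hFneg : F < 0 := by
      by_contra hc
      push_neg at hc
      nlinarith [key]
    exact ⟨hFneg, by nlinarith⟩
end

section
/- Let r, s, f be positive integers with r < s satisfying the master equation r² + s² = 2frs + f². Define the integer sequence (P_i) by P_{−1} = 0, P_0 = 1, P_{i+1} = 2f·P_i − P_{i−1}, and set F_i = P_{i−1}·s − P_i·r for i ≥ 0. If F_i = 0 for some i ≥ 1, then r = P_{i−1}·f and s = P_i·f. -/
/-- If F_i = 0 for some i ≥ 1, then r = P_{i−1}·f and s = P_i·f. -/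
theorem stmt18 (r s f : ℤ) (hr : 0 < r) (hs : 0 < s) (hf : 0 < f) (hrs : r < s)
    (hme : r ^ 2 + s ^ 2 = 2 * f * r * s + f ^ 2)
    (P : ℤ → ℤ) (hPm1 : P (-1) = 0) (hP0 : P 0 = 1)
    (hPrec : ∀ i : ℤ, 0 ≤ i → P (i + 1) = 2 * f * P i - P (i - 1))
    (F : ℤ → ℤ) (hFdef : ∀ i : ℤ, 0 ≤ i → F i = P (i - 1) * s - P i * r) :
    ∀ i : ℤ, 1 ≤ i → F i = 0 → r = P (i - 1) * f ∧ s = P i * f := by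
  -- Key invariants
  have key : ∀ i : ℤ, 0 ≤ i →
      (P i ^ 2 + P (i - 1) ^ 2 - 2 * f * P i * P (i - 1) = 1 ∧
       1 ≤ P i ∧ 0 ≤ P (i - 1) ∧ P (i - 1) ≤ P i) := by
    refine Int.le_induction ?_ ?_
    · simp [hPm1, hP0]
    · intro n hn ih
      obtain ⟨hid, h1, h0, hle⟩ := ih
      have hrec := hPrec n hn
      have hsimp : n + 1 - 1 = n := by ring
      rw [hsimp, hrec]
      have hfb : 0 ≤ (f - 1) * P n := mul_nonneg (by linarith) (by linarith)
      exact ⟨by linear_combination hid, by linarith, by linarith, by linarith⟩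
  intro i hi hF
  have hi0 : (0:ℤ) ≤ i := by linarith
  have hi1 : (0:ℤ) ≤ i - 1 := by linarith
  obtain ⟨hid, hb1, ha0, hab⟩ := key i hi0
  obtain ⟨-, ha1, -, -⟩ := key (i - 1) hi1
  set a := P (i - 1) with hadef
  set b := P i with hbdef
  have hFeq : a * s - b * r = 0 := by rw [← hFdef i hi0]; exact hF
  set t : ℤ := r * a + b * s - 2 * f * b * r with htdef
  have hra : r = a * t := by linear_combination (-r) * hid - b * hFeq
  have hsb : s = b * t := by
    have ha0' : a ≠ 0 := by linarith
    have h : a * s = a * (b * t) := by linear_combination hFeq + b * hra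
    exact mul_left_cancel₀ ha0' h
  have ht2 : t ^ 2 = f ^ 2 := by
    have hth := hme
    rw [hra, hsb] at hth
    linear_combination hth - t ^ 2 * hid
  have ht0 : 0 < t := by
    rcases le_or_gt t 0 with h | h
    · have hat : a * t ≤ 0 := mul_nonpos_of_nonneg_of_nonpos (by linarith) h
      linarith
    · exact h
  have htf : t = f := by
    have h1 : (t - f) * (t + f) = 0 := by linear_combination ht2
    rcases mul_eq_zero.mp h1 with h2 | h2
    · linarith
    · linarith
  exact ⟨by rw [hra, htf], by rw [hsb, htf]⟩
end
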